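/- Let G be a group, (Γ_n) a sequence of groups, and h_n : G → Γ_n a convergent sequence of homomorphisms, meaning: for every g ∈ G, either h_n(g) = 1 for all sufficiently large n, or h_n(g) ≠ 1 for all sufficiently large n. Let K be the stable kernel of (h_n). Let F be a group, π_n : F → Γ_n homomorphisms, and let B_n ⊆ G be an increasing sequence of subsets with ⋃_n B_n = G. Suppose for each n there is a homomorphism h̃_n : G → F with π_n ∘ h̃_n = h_n and such that h̃_n(g) = 1 for every g ∈ B_n with h_n(g) = 1. Then the sequence (h̃_n) is convergent and its stable kernel equals K; that is, for every g ∈ G: g ∈ K if and only if h̃_n(g) = 1 for all sufficiently large n, and for g ∉ K, h̃_n(g) ≠ 1 for all sufficiently large n. -/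
import Mathlib


theorem stmt_11 {G F : Type*} [Group G] [Group F]
    (Γ : ℕ → Type*) [∀ n, Group (Γ n)]
    (h : ∀ n, G →* Γ n)
    (hconv : ∀ g : G, (∃ n₀, ∀ n ≥ n₀, h n g = 1) ∨ (∃ n₀, ∀ n ≥ n₀, h n g ≠ 1))
    (K : Set G) (hK : K = {g : G | ∃ n₀, ∀ n ≥ n₀, h n g = 1})
    (π : ∀ n, F →* Γ n)
    (B : ℕ → Set G) (hmono : Monotone B) (hcover : ⋃ n, B n = Set.univ)
    (ht : ∀ n, G →* F)
    (hliftcomp : ∀ n, (π n).comp (ht n) = h n)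
    (hkill : ∀ n, ∀ g ∈ B n, h n g = 1 → ht n g = 1) :
    (∀ g : G, (∃ n₀, ∀ n ≥ n₀, ht n g = 1) ∨ (∃ n₀, ∀ n ≥ n₀, ht n g ≠ 1)) ∧
    (∀ g : G, g ∈ K ↔ ∃ n₀, ∀ n ≥ n₀, ht n g = 1) ∧
    (∀ g : G, g ∉ K → ∃ n₀, ∀ n ≥ n₀, ht n g ≠ 1) := by
  have hmem : ∀ g : G, ∃ m, g ∈ B m := by
    intro g
    have : g ∈ ⋃ n, B n := by rw [hcover]; trivial
    exact Set.mem_iUnion.mp this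
  have hπht : ∀ n (g : G), π n (ht n g) = h n g := by
    intro n g
    exact DFunLike.congr_fun (hliftcomp n) g
  have hpos : ∀ g : G, g ∈ K → ∃ n₀, ∀ n ≥ n₀, ht n g = 1 := by
    intro g hg
    rw [hK] at hg
    obtain ⟨n₀, hn₀⟩ := hg
    obtain ⟨m, hm⟩ := hmem g
    refine ⟨max n₀ m, fun n hn => ?_⟩
    exact hkill n g (hmono (le_trans (le_max_right _ _) hn) hm)
      (hn₀ n (le_trans (le_max_left _ _) hn))
  have hneg : ∀ g : G, g ∉ K → ∃ n₀, ∀ n ≥ n₀, ht n g ≠ 1 := by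
    intro g hg
    rcases hconv g with hc | hc
    · exact absurd (hK ▸ hc) hg
    · obtain ⟨n₀, hn₀⟩ := hc
      refine ⟨n₀, fun n hn he => hn₀ n hn ?_⟩
      rw [← hπht n g, he, map_one]
  refine ⟨fun g => ?_, fun g => ⟨hpos g, fun hgt => ?_⟩, hneg⟩
  · by_cases hg : g ∈ K
    · exact Or.inl (hpos g hg)
    · exact Or.inr (hneg g hg)
  · by_contra hg
    obtain ⟨n₀, hn₀⟩ := hneg g hg
    obtain ⟨n₁, hn₁⟩ := hgt
    exact hn₀ (max n₀ n₁) (le_max_left _ _) (hn₁ _ (le_max_right _ _))
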